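/- arXiv:1702.07478 — 9 statements merged into one kernel-verified Lean document; each statement's English description precedes it below -/
import Mathlib

section
/- Let S be a finite nonempty type and P : S → S → ℝ a row-stochastic matrix with P s s < 1 for all s. Let SL(s) := 1/(1 − P s s) and let P* be defined by P*(s,t) := SL(s)·P(s,t) for t ≠ s and P*(s,s) := 0. Suppose ψ* : S → ℝ satisfies ψ*(s) ≥ 0 for all s, Σ_s ψ*(s) = 1, and Σ_s ψ*(s)·P*(s,t) = ψ*(t) for all t (ψ* is a stationary distribution of P*). Define ψ(s) := ψ*(s)·SL(s) / Σ_t ψ*(t)·SL(t). Then Σ_s ψ(s) = 1 and Σ_s ψ(s)·P(s,t) = ψ(t) for all t, i.e. ψ is a stationary distribution of P. (Theorem 5.1: relation between the steady-state PMFs of the DTMC and of the embedded DTMC.) -/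
/-!
Off the diagonal, `SL s * P s t` is the embedded transition probability `P* s t`; on the diagonal
it is `SL t * P t t`. Hence `∑ s, ψ* s * SL s * P s t = ψ* t + ψ* t * SL t * P t t`, and since
`SL t * (1 - P t t) = 1` this equals `ψ* t * SL t`: the unnormalized weights `ψ* * SL` are invariant
for `P`, and so is any scalar multiple of them.
-/

open Finset

def IsInvariantWeight {S : Type*} [Fintype S] (P : S → S → ℝ) (w : S → ℝ) : Prop :=
  ∀ t, ∑ s, w s * P s t = w t

section

variable {S : Type*} [Fintype S] {P : S → S → ℝ}

theorem IsInvariantWeight.div_const {w : S → ℝ} (hw : IsInvariantWeight P w) (c : ℝ) :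
    IsInvariantWeight P (fun s ↦ w s / c) := by
  intro t
  simp_rw [div_mul_eq_mul_div, ← sum_div, hw t]

theorem isInvariantWeight_mul_selfLoop {SL : S → ℝ} (hSL : ∀ s, SL s * (1 - P s s) = 1)
    {Pstar : S → S → ℝ} (hPstar_off : ∀ s t, t ≠ s → Pstar s t = SL s * P s t)
    (hPstar_diag : ∀ s, Pstar s s = 0) {ψstar : S → ℝ} (hψstar : IsInvariantWeight Pstar ψstar) :
    IsInvariantWeight P (fun s ↦ ψstar s * SL s) := by
  classical
  intro t
  have hsplit : ∀ s, ψstar s * SL s * P s t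
      = ψstar s * Pstar s t + if s = t then ψstar t * SL t * P t t else 0 := by
    intro s
    by_cases hst : s = t
    · subst hst
      rw [hPstar_diag, if_pos rfl]
      ring
    · rw [hPstar_off s t (Ne.symm hst), if_neg hst]
      ring
  rw [sum_congr rfl fun s _ ↦ hsplit s, sum_add_distrib, hψstar t, sum_ite_eq',
    if_pos (mem_univ t)]
  linear_combination -ψstar t * hSL t

theorem sum_mul_pos_of_sum_eq_one {ψ w : S → ℝ} (hψ_nonneg : ∀ s, 0 ≤ ψ s)
    (hψ_sum : ∑ s, ψ s = 1) (hw : ∀ s, 0 < w s) : 0 < ∑ s, ψ s * w s := by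
  obtain ⟨s, -, hs⟩ := exists_ne_zero_of_sum_ne_zero (hψ_sum.symm ▸ one_ne_zero)
  exact sum_pos' (fun t _ ↦ mul_nonneg (hψ_nonneg t) (hw t).le)
    ⟨s, mem_univ s, mul_pos ((hψ_nonneg s).lt_of_ne' hs) (hw s)⟩

end

theorem edtmc_to_dtmc_stationary_general {S : Type*} [Fintype S]
    (P : S → S → ℝ)
    (hP_lt : ∀ s, P s s < 1)
    (SL : S → ℝ) (hSL : ∀ s, SL s = 1 / (1 - P s s))
    (Pstar : S → S → ℝ)
    (hPstar_off : ∀ s t, t ≠ s → Pstar s t = SL s * P s t)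
    (hPstar_diag : ∀ s, Pstar s s = 0)
    (ψstar : S → ℝ)
    (hψstar_nonneg : ∀ s, 0 ≤ ψstar s)
    (hψstar_sum : ∑ s, ψstar s = 1)
    (hψstar_stat : ∀ t, ∑ s, ψstar s * Pstar s t = ψstar t)
    (ψ : S → ℝ)
    (hψ : ∀ s, ψ s = ψstar s * SL s / ∑ t, ψstar t * SL t) :
    (∑ s, ψ s = 1) ∧ (∀ t, ∑ s, ψ s * P s t = ψ t) := by
  have hSL_mul : ∀ s, SL s * (1 - P s s) = 1 := fun s ↦ by
    rw [hSL s, one_div_mul_cancel (sub_ne_zero.mpr (hP_lt s).ne')]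
  have hSL_pos : ∀ s, 0 < SL s := fun s ↦ by
    rw [hSL s]
    exact one_div_pos.mpr (sub_pos.mpr (hP_lt s))
  have hnorm_pos := sum_mul_pos_of_sum_eq_one hψstar_nonneg hψstar_sum hSL_pos
  obtain rfl : ψ = fun s ↦ ψstar s * SL s / ∑ t, ψstar t * SL t := funext hψ
  exact ⟨by rw [← sum_div, div_self hnorm_pos.ne'],
    (isInvariantWeight_mul_selfLoop hSL_mul hPstar_off hPstar_diag hψstar_stat).div_const _⟩

/-- Theorem 5.1: the steady-state PMF of the DTMC is obtained from that of the
embedded DTMC (EDTMC) by weighting with the self-loops abstraction factors and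
normalizing. -/
theorem edtmc_to_dtmc_stationary {S : Type*} [Fintype S] [Nonempty S]
    (P : S → S → ℝ)
    (hP_nonneg : ∀ s t, 0 ≤ P s t)
    (hP_row : ∀ s, ∑ t, P s t = 1)
    (hP_lt : ∀ s, P s s < 1)
    (SL : S → ℝ) (hSL : ∀ s, SL s = 1 / (1 - P s s))
    (Pstar : S → S → ℝ)
    (hPstar_off : ∀ s t, t ≠ s → Pstar s t = SL s * P s t)
    (hPstar_diag : ∀ s, Pstar s s = 0)
    (ψstar : S → ℝ)
    (hψstar_nonneg : ∀ s, 0 ≤ ψstar s)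
    (hψstar_sum : ∑ s, ψstar s = 1)
    (hψstar_stat : ∀ t, ∑ s, ψstar s * Pstar s t = ψstar t)
    (ψ : S → ℝ)
    (hψ : ∀ s, ψ s = ψstar s * SL s / ∑ t, ψstar t * SL t) :
    (∑ s, ψ s = 1) ∧ (∀ t, ∑ s, ψ s * P s t = ψ t) :=
  edtmc_to_dtmc_stationary_general P hP_lt SL hSL Pstar hPstar_off hPstar_diag ψstar hψstar_nonneg
    hψstar_sum hψstar_stat ψ hψ
end

section
/- Let S be a finite type, L a type of labels with a distinguished element ∅ (the empty multiaction part), and p : S → L → S → ℝ a step kernel such that the empty-step kernel is diagonal: p s ∅ t = 0 whenever t ≠ s. Call a state s tangible if p s ∅ s > 0 and vanishing otherwise. If R is a step stochastic bisimulation for p, then for every (s₁,s₂) ∈ R one has p s₁ ∅ s₁ = p s₂ ∅ s₂; in particular s₁ is tangible if and only if s₂ is tangible, so R is contained in (T × T) ∪ (V × V), where T and V denote the sets of tangible and vanishing states. (Proposition 6.1: every step stochastic bisimulation relates tangible states only with tangible ones and vanishing states only with vanishing ones.) -/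
/-- The overall probability to move from `s` into the set of states `H`
via steps with multiaction part `A`. -/
noncomputable def PMA {S L : Type*} [Fintype S]
    (p : S → L → S → ℝ) (A : L) (s : S) (H : Set S) : ℝ :=
  ∑ t, H.indicator (p s A) t

/-- `H` is an equivalence class of the relation `R`. -/
def IsClass {S : Type*} (R : S → S → Prop) (H : Set S) : Prop :=
  ∃ s, H = {t | R s t}

/-- `R` is a step stochastic bisimulation for the step kernel `p`. -/
def IsStepBisim {S L : Type*} [Fintype S]
    (p : S → L → S → ℝ) (R : S → S → Prop) : Prop :=
  Equivalence R ∧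
    ∀ s₁ s₂, R s₁ s₂ → ∀ H : Set S, IsClass R H → ∀ A : L,
      PMA p A s₁ H = PMA p A s₂ H

theorem PMA_eq_apply_self_of_diag {S L : Type*} [Fintype S] {p : S → L → S → ℝ} {A : L}
    {s : S} {H : Set S} (hdiag : ∀ t, t ≠ s → p s A t = 0) (hs : s ∈ H) :
    PMA p A s H = p s A s := by
  rw [PMA, Fintype.sum_eq_single s fun t ht => by simp [hdiag t ht], Set.indicator_of_mem hs]

theorem IsStepBisim.apply_self_eq_of_diag {S L : Type*} [Fintype S] {p : S → L → S → ℝ}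
    {R : S → S → Prop} (hR : IsStepBisim p R) {A : L} (hdiag : ∀ s t, t ≠ s → p s A t = 0)
    {s₁ s₂ : S} (h : R s₁ s₂) : p s₁ A s₁ = p s₂ A s₂ := by
  set H : Set S := {t | R s₁ t}
  have hs₁ : s₁ ∈ H := hR.1.refl s₁
  have hs₂ : s₂ ∈ H := h
  have hclass := hR.2 s₁ s₂ h H ⟨s₁, rfl⟩ A
  rwa [PMA_eq_apply_self_of_diag (hdiag s₁) hs₁, PMA_eq_apply_self_of_diag (hdiag s₂) hs₂]
    at hclass

theorem stepBisim_tangible_vanishing_general {S L : Type*} [Fintype S]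
    (emptyStep : L)
    (p : S → L → S → ℝ)
    (hp_diag : ∀ s t, t ≠ s → p s emptyStep t = 0)
    (R : S → S → Prop) (hR : IsStepBisim p R) :
    ∀ s₁ s₂, R s₁ s₂ →
      p s₁ emptyStep s₁ = p s₂ emptyStep s₂ ∧
      (0 < p s₁ emptyStep s₁ ↔ 0 < p s₂ emptyStep s₂) := by
  intro s₁ s₂ h
  have hself := hR.apply_self_eq_of_diag hp_diag h
  exact ⟨hself, by rw [hself]⟩

/-- Proposition 6.1: every step stochastic bisimulation relates tangible
states only with tangible states, and vanishing states only with vanishing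
states (a state `s` being tangible iff `p s ∅ s > 0`, where the empty-step
kernel is diagonal). -/
theorem stepBisim_tangible_vanishing {S L : Type*} [Fintype S]
    (emptyStep : L)
    (p : S → L → S → ℝ)
    (hp_nonneg : ∀ s A t, 0 ≤ p s A t)
    (hp_diag : ∀ s t, t ≠ s → p s emptyStep t = 0)
    (R : S → S → Prop) (hR : IsStepBisim p R) :
    ∀ s₁ s₂, R s₁ s₂ →
      p s₁ emptyStep s₁ = p s₂ emptyStep s₂ ∧
      (0 < p s₁ emptyStep s₁ ↔ 0 < p s₂ emptyStep s₂) :=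
  stepBisim_tangible_vanishing_general emptyStep p hp_diag R hR
end

section
/- Let S be a finite type, L a type of labels, p : S → L → S → ℝ a step kernel, and i₁, i₂ ∈ S. Let (R_j)_{j ∈ J} be a nonempty family of equivalence relations on S such that each R_j is a step stochastic bisimulation for p and (i₁,i₂) ∈ R_j for every j. Then the transitive closure R of the union ⋃_{j∈J} R_j is again an equivalence relation on S, contains the pair (i₁,i₂), and is a step stochastic bisimulation for p. Consequently, the union of all step stochastic bisimulations containing (i₁,i₂) is itself the largest step stochastic bisimulation containing (i₁,i₂). (Proposition 6.2.) -/
/-!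
An equivalence class `H` of the transitive closure `R` of `⋃ⱼ Rⱼ` is saturated for every `Rⱼ`,
i.e. a disjoint union of `Rⱼ`-classes, so `PMA_A(·, H)` takes equal values at `Rⱼ`-related
states; following an `R`-chain one edge at a time, it takes equal values at `R`-related states.
For the (nonempty) family of all step bisimulations containing `(i₁, i₂)`, the closure is
itself a member of the family, so their union coincides with it and is a step bisimulation.
-/

open Finset Relation

lemma equivalence_transGen_iUnion {α J : Type*} [Nonempty J] {R : J → α → α → Prop}
    (hR : ∀ j, Equivalence (R j)) : Equivalence (TransGen fun a b => ∃ j, R j a b) := by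
  obtain ⟨j₀⟩ := ‹Nonempty J›
  exact ⟨fun a => .single ⟨j₀, (hR j₀).refl a⟩,
    fun h => transGen_swap.1 (TransGen.mono (fun _ _ ⟨j, hj⟩ => ⟨j, (hR j).symm hj⟩) _ _ h),
    TransGen.trans⟩

section

variable {S L : Type*} [Fintype S] (p : S → L → S → ℝ)

lemma PMA_preimage_eq_sum {β : Type*} [DecidableEq β] (A : L) (s : S) (q : S → β)
    (Q : Finset β) :
    PMA p A s (q ⁻¹' Q) = ∑ c ∈ Q, PMA p A s (q ⁻¹' {c}) := by
  classical
  simp only [PMA, Set.indicator_apply, Set.mem_preimage, Finset.mem_coe,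
    Set.mem_singleton_iff]
  rw [Finset.sum_comm]
  exact sum_congr rfl fun t _ => (Finset.sum_ite_eq Q (q t) fun _ => p s A t).symm

variable {p}

lemma IsStepBisim.PMA_eq_of_saturated {E : S → S → Prop} (hE : IsStepBisim p E) {H : Set S}
    (hH : ∀ ⦃t u⦄, E t u → t ∈ H → u ∈ H) {s₁ s₂ : S} (h : E s₁ s₂) (A : L) :
    PMA p A s₁ H = PMA p A s₂ H := by
  classical
  let q : S → Quotient ⟨E, hE.1⟩ := Quotient.mk _
  have hq : ∀ t u, q t = q u ↔ E t u := fun _ _ => Quotient.eq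
  have hH_eq : H = q ⁻¹' ↑(univ.filter (· ∈ q '' H)) := by
    ext t
    simp only [Set.mem_preimage, coe_filter, mem_univ, true_and, Set.mem_image]
    exact ⟨fun ht => ⟨t, ht, rfl⟩, fun ⟨u, hu, hut⟩ => hH ((hq u t).1 hut) hu⟩
  have hclass : ∀ c, IsClass E (q ⁻¹' {c}) := by
    refine Quotient.ind fun t => ⟨t, ?_⟩
    ext u
    exact (hq u t).trans ⟨hE.1.symm, hE.1.symm⟩
  rw [hH_eq, PMA_preimage_eq_sum, PMA_preimage_eq_sum]
  exact sum_congr rfl fun c _ => hE.2 s₁ s₂ h _ (hclass c) A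

lemma isStepBisim_transGen_iUnion {J : Type*} [Nonempty J] (R : J → S → S → Prop)
    (hR : ∀ j, IsStepBisim p (R j)) : IsStepBisim p (TransGen fun a b => ∃ j, R j a b) := by
  refine ⟨equivalence_transGen_iUnion fun j => (hR j).1, ?_⟩
  rintro s₁ s₂ h H ⟨s₀, rfl⟩ A
  have hedge : ∀ ⦃a b⦄, (∃ j, R j a b) →
      PMA p A a {t | TransGen (fun a b => ∃ j, R j a b) s₀ t} = PMA p A b {t | TransGen _ s₀ t} :=
    fun a b ⟨j, hj⟩ => (hR j).PMA_eq_of_saturated (fun _ _ htu ht => ht.tail ⟨j, htu⟩) hj A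
  induction h with
  | single h => exact hedge h
  | tail _ h ih => exact ih.trans (hedge h)

end

theorem largest_step_stochastic_bisimulation_general {S L : Type*} [Fintype S]
    (p : S → L → S → ℝ)
    (i₁ i₂ : S)
    {J : Type*} [Nonempty J]
    (Rj : J → S → S → Prop)
    (hRj : ∀ j, IsStepBisim p (Rj j))
    (hRj_i : ∀ j, Rj j i₁ i₂) :
    (IsStepBisim p (Relation.TransGen (fun a b => ∃ j, Rj j a b)) ∧
        Relation.TransGen (fun a b => ∃ j, Rj j a b) i₁ i₂) ∧
      (IsStepBisim p (fun a b => ∃ R' : S → S → Prop,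
          IsStepBisim p R' ∧ R' i₁ i₂ ∧ R' a b) ∧
        (∃ R' : S → S → Prop, IsStepBisim p R' ∧ R' i₁ i₂ ∧ R' i₁ i₂) ∧
        ∀ R' : S → S → Prop, IsStepBisim p R' → R' i₁ i₂ → ∀ a b, R' a b →
          ∃ R'' : S → S → Prop, IsStepBisim p R'' ∧ R'' i₁ i₂ ∧ R'' a b) := by
  obtain ⟨j₀⟩ := ‹Nonempty J›
  have hbisim := isStepBisim_transGen_iUnion Rj hRj
  have hpair : TransGen (fun a b => ∃ j, Rj j a b) i₁ i₂ := .single ⟨j₀, hRj_i j₀⟩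
  let K := {R : S → S → Prop // IsStepBisim p R ∧ R i₁ i₂}
  let k₀ : K := ⟨_, hbisim, hpair⟩
  have hK : IsStepBisim p (TransGen fun a b => ∃ k : K, k.1 a b) :=
    have : Nonempty K := ⟨k₀⟩
    isStepBisim_transGen_iUnion _ fun k => k.2.1
  have hKpair : TransGen (fun a b => ∃ k : K, k.1 a b) i₁ i₂ := .single ⟨k₀, hpair⟩
  have hunion : (fun a b => ∃ R' : S → S → Prop, IsStepBisim p R' ∧ R' i₁ i₂ ∧ R' a b) =
      TransGen fun a b => ∃ k : K, k.1 a b := by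
    funext a b
    exact propext ⟨fun ⟨R', hR', hR'i, hab⟩ => .single ⟨⟨R', hR', hR'i⟩, hab⟩,
      fun hab => ⟨_, hK, hKpair, hab⟩⟩
  exact ⟨⟨hbisim, hpair⟩, hunion ▸ hK, ⟨_, hK, hKpair, hKpair⟩,
    fun R' hR' hR'i a b hab => ⟨R', hR', hR'i, hab⟩⟩

/-- Proposition 6.2: the transitive closure of a (nonempty) union of step
stochastic bisimulations all containing the pair `(i₁, i₂)` is again a step
stochastic bisimulation containing `(i₁, i₂)`; consequently the union of all
step stochastic bisimulations containing `(i₁, i₂)` is itself the largest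
step stochastic bisimulation containing `(i₁, i₂)`. -/
theorem largest_step_stochastic_bisimulation {S L : Type*} [Fintype S]
    (p : S → L → S → ℝ)
    (hp_nonneg : ∀ s A t, 0 ≤ p s A t)
    (i₁ i₂ : S)
    {J : Type*} [Nonempty J]
    (Rj : J → S → S → Prop)
    (hRj : ∀ j, IsStepBisim p (Rj j))
    (hRj_i : ∀ j, Rj j i₁ i₂) :
    (IsStepBisim p (Relation.TransGen (fun a b => ∃ j, Rj j a b)) ∧
        Relation.TransGen (fun a b => ∃ j, Rj j a b) i₁ i₂) ∧
      (IsStepBisim p (fun a b => ∃ R' : S → S → Prop,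
          IsStepBisim p R' ∧ R' i₁ i₂ ∧ R' a b) ∧
        (∃ R' : S → S → Prop, IsStepBisim p R' ∧ R' i₁ i₂ ∧ R' i₁ i₂) ∧
        ∀ R' : S → S → Prop, IsStepBisim p R' → R' i₁ i₂ → ∀ a b, R' a b →
          ∃ R'' : S → S → Prop, IsStepBisim p R'' ∧ R'' i₁ i₂ ∧ R'' a b) :=
  largest_step_stochastic_bisimulation_general p i₁ i₂ Rj hRj hRj_i
end

section
/- Let S₁ and S₂ be finite types with step kernels p₁ : S₁ → L → S₁ → ℝ and p₂ : S₂ → L → S₂ → ℝ and initial states i₁ ∈ S₁, i₂ ∈ S₂. Suppose β : S₁ ≃ S₂ is a bijection with β(i₁) = i₂ and p₂ (β s) A (β t) = p₁ s A t for all s, t ∈ S₁ and all labels A (β is an isomorphism of the labeled probabilistic transition systems). Define the step kernel p on the disjoint union S = S₁ ⊕ S₂ by p (inl s) A (inl t) := p₁ s A t, p (inr s) A (inr t) := p₂ s A t, and p := 0 between the two components. Then the equivalence relation on S generated by the pairs {(inl s, inr (β s)) : s ∈ S₁} is a step stochastic bisimulation for p containing (inl i₁, inr i₂). (Theorem 7.1,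 first implication: equivalence with respect to transition systems implies step stochastic bisimulation equivalence.) -/
theorem isStepBisim_ker {S T L : Type*} [Fintype S] {p : S → L → S → ℝ} (f : S → T)
    (hf : ∀ a b, f a = f b → ∀ A c, PMA p A a (f ⁻¹' {c}) = PMA p A b (f ⁻¹' {c})) :
    IsStepBisim p (fun a b => f a = f b) := by
  refine ⟨(Setoid.ker f).iseqv, fun a b hab H ⟨s, hH⟩ A => ?_⟩
  have hfibre : H = f ⁻¹' {f s} := hH.trans (Set.ext fun t => eq_comm)
  rw [hfibre]
  exact hf a b hab A (f s)

theorem eqvGen_graph_eq_ker {S₁ S₂ : Type*} (β : S₁ → S₂) :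
    Relation.EqvGen (fun a b => ∃ s, a = Sum.inl s ∧ b = Sum.inr (β s)) =
      fun a b => Sum.elim β id a = Sum.elim β id b := by
  ext a b
  constructor
  · intro h
    induction h with
    | rel a b hab => obtain ⟨s, rfl, rfl⟩ := hab; rfl
    | refl => rfl
    | symm _ _ _ ih => exact ih.symm
    | trans _ _ _ _ _ ih₁ ih₂ => exact ih₁.trans ih₂
  · have edge : ∀ s, Relation.EqvGen (fun a b => ∃ s, a = Sum.inl s ∧ b = Sum.inr (β s))
        (Sum.inl s) (Sum.inr (β s)) := fun s => .rel _ _ ⟨s, rfl, rfl⟩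
    rcases a with s | s <;> rcases b with t | t <;>
      intro h <;> simp only [Sum.elim_inl, Sum.elim_inr, id] at h <;> subst_vars
    · exact (edge s).trans _ _ _ (h ▸ (edge t).symm)
    · exact edge s
    · exact (edge t).symm
    · exact .refl _

theorem pma_preimage_sumElim {S₁ S₂ L : Type*} [Fintype S₁] [Fintype S₂]
    (p : S₁ ⊕ S₂ → L → S₁ ⊕ S₂ → ℝ) (β : S₁ ≃ S₂) (A : L) (x : S₁ ⊕ S₂) (c : S₂) :
    PMA p A x (Sum.elim β id ⁻¹' {c}) = p x A (.inl (β.symm c)) + p x A (.inr c) := by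
  rw [PMA, Fintype.sum_sum_type, Fintype.sum_eq_single (β.symm c), Fintype.sum_eq_single c]
  · simp
  · exact fun t ht => Set.indicator_of_notMem (by simpa using ht) _
  · exact fun s hs => Set.indicator_of_notMem (by simpa [β.eq_symm_apply] using hs) _

theorem ts_isomorphism_implies_stepBisim_general {S₁ S₂ L : Type*}
    [Fintype S₁] [Fintype S₂]
    (p₁ : S₁ → L → S₁ → ℝ) (p₂ : S₂ → L → S₂ → ℝ)
    (i₁ : S₁) (i₂ : S₂)
    (β : S₁ ≃ S₂) (hβi : β i₁ = i₂)
    (hβp : ∀ s A t, p₂ (β s) A (β t) = p₁ s A t)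
    (p : S₁ ⊕ S₂ → L → S₁ ⊕ S₂ → ℝ)
    (hp11 : ∀ s A t, p (Sum.inl s) A (Sum.inl t) = p₁ s A t)
    (hp22 : ∀ s A t, p (Sum.inr s) A (Sum.inr t) = p₂ s A t)
    (hp12 : ∀ s A t, p (Sum.inl s) A (Sum.inr t) = 0)
    (hp21 : ∀ s A t, p (Sum.inr s) A (Sum.inl t) = 0) :
    IsStepBisim p
        (Relation.EqvGen (fun a b => ∃ s, a = Sum.inl s ∧ b = Sum.inr (β s))) ∧
      Relation.EqvGen (fun a b => ∃ s, a = Sum.inl s ∧ b = Sum.inr (β s))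
        (Sum.inl i₁) (Sum.inr i₂) := by
  rw [eqvGen_graph_eq_ker]
  have lumped : ∀ x A c, PMA p A x (Sum.elim β id ⁻¹' {c}) = p₂ (Sum.elim β id x) A c := by
    rintro (s | s) A c <;> rw [pma_preimage_sumElim]
    · rw [hp11, hp12, add_zero, ← hβp, β.apply_symm_apply, Sum.elim_inl]
    · rw [hp21, hp22, zero_add, Sum.elim_inr, id]
  refine ⟨isStepBisim_ker _ fun a b hab A c => ?_, hβi⟩
  rw [lumped, lumped, hab]

/-- Theorem 7.1 (first implication): if the labeled probabilistic transition
systems of two processes are isomorphic via `β`, then the equivalence relation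
on the disjoint union generated by the pairs `(inl s, inr (β s))` is a step
stochastic bisimulation containing the pair of initial states. -/
theorem ts_isomorphism_implies_stepBisim {S₁ S₂ L : Type*}
    [Fintype S₁] [Fintype S₂]
    (p₁ : S₁ → L → S₁ → ℝ) (p₂ : S₂ → L → S₂ → ℝ)
    (hp₁ : ∀ s A t, 0 ≤ p₁ s A t) (hp₂ : ∀ s A t, 0 ≤ p₂ s A t)
    (i₁ : S₁) (i₂ : S₂)
    (β : S₁ ≃ S₂) (hβi : β i₁ = i₂)
    (hβp : ∀ s A t, p₂ (β s) A (β t) = p₁ s A t)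
    (p : S₁ ⊕ S₂ → L → S₁ ⊕ S₂ → ℝ)
    (hp11 : ∀ s A t, p (Sum.inl s) A (Sum.inl t) = p₁ s A t)
    (hp22 : ∀ s A t, p (Sum.inr s) A (Sum.inr t) = p₂ s A t)
    (hp12 : ∀ s A t, p (Sum.inl s) A (Sum.inr t) = 0)
    (hp21 : ∀ s A t, p (Sum.inr s) A (Sum.inl t) = 0) :
    IsStepBisim p
        (Relation.EqvGen (fun a b => ∃ s, a = Sum.inl s ∧ b = Sum.inr (β s))) ∧
      Relation.EqvGen (fun a b => ∃ s, a = Sum.inl s ∧ b = Sum.inr (β s))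
        (Sum.inl i₁) (Sum.inr i₂) :=
  ts_isomorphism_implies_stepBisim_general p₁ p₂ i₁ i₂ β hβi hβp p hp11 hp22 hp12 hp21
end

section
/- Let S be a finite type, P : S → S → ℝ a matrix, and R an ordinary lumping for P. If μ, μ' : S → ℝ satisfy Σ_{s∈H} μ(s) = Σ_{s∈H} μ'(s) for every R-equivalence class H, then for every R-equivalence class H one has Σ_{t∈H} Σ_{s∈S} μ(s)·P(s,t) = Σ_{t∈H} Σ_{s∈S} μ'(s)·P(s,t); that is, equality of class sums of distributions is preserved under one step of the chain. (Induction step in the proof of Proposition 8.1.) -/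
noncomputable def classSum {S : Type*} [Fintype S] (H : Set S) (f : S → ℝ) : ℝ :=
  ∑ s, H.indicator f s

def IsLumping {S : Type*} [Fintype S] (P : S → S → ℝ) (R : S → S → Prop) : Prop :=
  Equivalence R ∧
    ∀ s₁ s₂, R s₁ s₂ → ∀ H : Set S, IsClass R H →
      classSum H (P s₁) = classSum H (P s₂)

/-! A one-step image `μ P` has class sums `∑ₛ μ s · (class sum of row s)`. For a lumping the
row class sums are constant on classes, so regrouping the sum over `s` by classes shows that
it depends on `μ` only through its class sums. -/

open Finset

section
variable {S : Type*} [Fintype S]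

theorem classSum_eq_sum_filter (H : Set S) [DecidablePred (· ∈ H)] (f : S → ℝ) :
    classSum H f = ∑ s with s ∈ H, f s :=
  sum_indicator_eq_sum_filter univ (fun _ => f) (fun _ => H) id

theorem classSum_sum_mul (H : Set S) (P : S → S → ℝ) (μ : S → ℝ) :
    classSum H (fun t => ∑ s, μ s * P s t) = ∑ s, μ s * classSum H (P s) := by
  classical
  simp only [classSum_eq_sum_filter, mul_sum]
  exact sum_comm

theorem sum_mul_eq_sum_quotient (r : Setoid S) [Fintype (Quotient r)] {g : S → ℝ}
    (hg : ∀ a b, a ≈ b → g a = g b) (ν : S → ℝ) :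
    ∑ s, ν s * g s = ∑ q : Quotient r, g q.out * classSum {t | q.out ≈ t} ν := by
  classical
  rw [← sum_fiberwise univ (Quotient.mk r)]
  refine sum_congr rfl fun q _ => ?_
  have fiber_eq_class : ∀ s, Quotient.mk r s = q ↔ q.out ≈ s := fun s =>
    Quotient.mk_eq_iff_out.trans ⟨Setoid.symm, Setoid.symm⟩
  rw [classSum_eq_sum_filter, mul_sum]
  refine sum_congr (by ext; simp [fiber_eq_class]) fun s hs => ?_
  rw [hg s q.out (Setoid.symm (mem_filter.1 hs).2), mul_comm]

theorem sum_mul_eq_of_classSum_eq {R : S → S → Prop} (hR : Equivalence R) {g : S → ℝ}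
    (hg : ∀ a b, R a b → g a = g b) {μ μ' : S → ℝ}
    (hμ : ∀ H : Set S, IsClass R H → classSum H μ = classSum H μ') :
    ∑ s, μ s * g s = ∑ s, μ' s * g s := by
  classical
  let r : Setoid S := ⟨R, hR⟩
  rw [sum_mul_eq_sum_quotient r hg, sum_mul_eq_sum_quotient r hg]
  exact sum_congr rfl fun q _ => congrArg (g q.out * ·) (hμ _ ⟨q.out, rfl⟩)

end

/-- Induction step in the proof of Proposition 8.1: equality of class sums of
distributions is preserved under one step of the chain. -/
theorem lumping_step_preserves_class_sums {S : Type*} [Fintype S]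
    (P : S → S → ℝ) (R : S → S → Prop)
    (hR : IsLumping P R)
    (μ μ' : S → ℝ)
    (hμ : ∀ H : Set S, IsClass R H → classSum H μ = classSum H μ') :
    ∀ H : Set S, IsClass R H →
      classSum H (fun t => ∑ s, μ s * P s t) =
        classSum H (fun t => ∑ s, μ' s * P s t) := by
  intro H hH
  rw [classSum_sum_mul, classSum_sum_mul]
  exact sum_mul_eq_of_classSum_eq hR.1 (fun a b hab => hR.2 a b hab H hH) hμ
end

section
/- Let S be a finite type, P : S → S → ℝ a matrix, R an ordinary lumping for P, and i₁, i₂ ∈ S with (i₁,i₂) ∈ R. Then for every k ∈ ℕ and every R-equivalence class H, Σ_{t∈H} (P^k)(i₁,t) = Σ_{t∈H} (P^k)(i₂,t), where P^k denotes the k-th matrix power. (Transient part of Proposition 8.1: the transient probability mass functions started in related states have equal sums over every equivalence class.) -/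
/-!
A class sum of a row of `M` is an entry of `M *ᵥ 1_H`. The lumping condition says that `P` maps
the indicator of each class to a vector constant on classes; since those indicators span the
vectors constant on classes, `P` preserves that subspace, hence so does every power `P ^ k`.
-/

open Matrix

section

variable {S : Type*}

lemma classSum_eq_dotProduct_indicator [Fintype S] (H : Set S) (f : S → ℝ) :
    classSum H f = f ⬝ᵥ H.indicator 1 := by
  unfold classSum dotProduct
  refine Finset.sum_congr rfl fun s _ => ?_
  by_cases hs : s ∈ H <;> simp [hs]

def invariantVectors (R : S → S → Prop) : Submodule ℝ (S → ℝ) where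
  carrier := {v | ∀ a b, R a b → v a = v b}
  add_mem' hv hw a b hab := by simp only [Pi.add_apply, hv a b hab, hw a b hab]
  zero_mem' _ _ _ := rfl
  smul_mem' c v hv a b hab := by simp only [Pi.smul_apply, hv a b hab]

def classIndicators (R : S → S → Prop) : Set (S → ℝ) :=
  {u | ∃ H, IsClass R H ∧ u = H.indicator 1}

lemma indicator_mem_invariantVectors {R : S → S → Prop} (hR : Equivalence R) {H : Set S}
    (hH : IsClass R H) : H.indicator 1 ∈ invariantVectors R := by
  obtain ⟨s, rfl⟩ := hH
  intro a b hab
  have hmem : R s a ↔ R s b := ⟨fun h => hR.trans h hab, fun h => hR.trans h (hR.symm hab)⟩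
  by_cases ha : R s a <;> simp [Set.indicator, ha, hmem.mp, mt hmem.mpr]

lemma invariantVectors_eq_span_classIndicators [Fintype S] {R : S → S → Prop}
    (hR : Equivalence R) :
    invariantVectors R = Submodule.span ℝ (classIndicators R) := by
  classical
  refine le_antisymm (fun v hv => ?_) ?_
  · let st : Setoid S := ⟨R, hR⟩
    have hdecomp : v = ∑ q : Quotient st, v q.out • {t | R q.out t}.indicator 1 := by
      funext j
      rw [Finset.sum_apply, Finset.sum_eq_single ⟦j⟧]
      · have hj : R (⟦j⟧ : Quotient st).out j := Quotient.mk_out (s := st) j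
        simp [hj, hv _ _ hj]
      · intro q _ hq
        have hnot : ¬ R q.out j := fun h =>
          hq (by rw [← Quotient.out_eq q]; exact Quotient.sound (s := st) h)
        simp [hnot]
      · simp
    rw [hdecomp]
    exact Submodule.sum_mem _ fun q _ =>
      Submodule.smul_mem _ _ (Submodule.subset_span ⟨_, ⟨q.out, rfl⟩, rfl⟩)
  · rw [Submodule.span_le]
    rintro _ ⟨H, hH, rfl⟩
    exact indicator_mem_invariantVectors hR hH

lemma mulVec_mem_invariantVectors [Fintype S] {P : Matrix S S ℝ} {R : S → S → Prop}
    (hP : IsLumping P R) {v : S → ℝ} (hv : v ∈ invariantVectors R) :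
    P *ᵥ v ∈ invariantVectors R := by
  suffices invariantVectors R ≤ (invariantVectors R).comap P.mulVecLin from this hv
  -- the preimage is a submodule, so it suffices to check the spanning class indicators
  rw [invariantVectors_eq_span_classIndicators hP.1, Submodule.span_le,
    ← invariantVectors_eq_span_classIndicators hP.1]
  rintro _ ⟨H, hH, rfl⟩ a b hab
  simpa only [Matrix.mulVecLin_apply, Matrix.mulVec, classSum_eq_dotProduct_indicator]
    using hP.2 a b hab H hH

lemma pow_mulVec_mem_invariantVectors [Fintype S] [DecidableEq S] {P : Matrix S S ℝ}
    {R : S → S → Prop} (hP : IsLumping P R) {v : S → ℝ} (hv : v ∈ invariantVectors R)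
    (k : ℕ) :
    (P ^ k) *ᵥ v ∈ invariantVectors R := by
  induction k with
  | zero => simpa using hv
  | succ k ih =>
    simpa only [pow_succ', ← Matrix.mulVec_mulVec] using mulVec_mem_invariantVectors hP ih

end

/-- Transient part of Proposition 8.1: if `(i₁, i₂)` belongs to an ordinary
lumping `R` for `P`, then for every `k` the `k`-step transient PMFs started in
`i₁` and in `i₂` have equal sums over every `R`-equivalence class. -/
theorem lumping_transient_class_sums {S : Type*} [Fintype S] [DecidableEq S]
    (P : Matrix S S ℝ) (R : S → S → Prop)
    (hR : IsLumping (fun s t => P s t) R)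
    (i₁ i₂ : S) (h : R i₁ i₂) :
    ∀ k : ℕ, ∀ H : Set S, IsClass R H →
      classSum H (fun t => (P ^ k) i₁ t) = classSum H (fun t => (P ^ k) i₂ t) := by
  intro k H hH
  simp only [classSum_eq_dotProduct_indicator]
  exact pow_mulVec_mem_invariantVectors hR (indicator_mem_invariantVectors hR.1 hH) k i₁ i₂ h
end

section
/- Let S be a finite type, L a type of labels, p a step kernel on S, and R a step stochastic bisimulation for p. Let n ≥ 1, let H₀, H₁, …, H_n be R-equivalence classes, A₁, …, A_n labels, and let s₀ ∈ H₀ and, for each 0 ≤ i ≤ n−1, a representative r_i ∈ H_i (with r₀ = s₀ allowed or not). Then the sum over all tuples (s₁,…,s_n) with s_i ∈ H_i for 1 ≤ i ≤ n of the products Π_{i=1}^n p s_{i−1} A_i s_i equals Π_{i=1}^n PM_{A_i}(r_{i−1}, H_i). In particular this product is independent of the choice of the representatives r_i ∈ H_i. (Path-sum lemma from the proof of Theorem 8.1: the total probability of all paths from s₀ passing through the classes H₁,…,H_n via labels A₁,…,A_n equals the product of the class-to-class transition probabilities.) -/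
/-!
Induction on `n`, peeling off the first step. By induction, the paths through `H 1, …, H n`
starting at any `y ∈ H 1` have the same total weight `∏_{i ≥ 1} PMA_{A i}(r i, H (i + 1))`, so
summing over the first step `s₀ → y` contributes the factor `PMA_{A 0}(s₀, H 1)`. The bisimulation
turns it into `PMA_{A 0}(r 0, H 1)`, as `s₀` and `r 0` lie in the same class `H 0`.
-/

section

variable {S L : Type*}

theorem IsClass.rel_of_mem {R : S → S → Prop} (hE : Equivalence R) {H : Set S}
    (hH : IsClass R H) {a b : S} (ha : a ∈ H) (hb : b ∈ H) : R a b := by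
  obtain ⟨s, rfl⟩ := hH
  exact hE.trans (hE.symm ha) hb

variable [Fintype S]

theorem IsStepBisim.PMA_eq_of_mem_class {p : S → L → S → ℝ} {R : S → S → Prop}
    (hR : IsStepBisim p R) {H H' : Set S} (hH : IsClass R H) (hH' : IsClass R H') (A : L)
    {s s' : S} (hs : s ∈ H) (hs' : s' ∈ H) : PMA p A s H' = PMA p A s' H' :=
  hR.2 s s' (hH.rel_of_mem hR.1 hs hs') H' hH' A

variable [DecidableEq S]

/-- The weight of the paths `s₀ → s₁ → ⋯ → sₙ` with `sᵢ ∈ H i` for `i ≥ 1`; the step into `sᵢ₊₁`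
carries the label `A i`. -/
noncomputable def classPathSum {n : ℕ} (p : S → L → S → ℝ) (H : Fin (n + 1) → Set S)
    (A : Fin n → L) (s₀ : S) : ℝ :=
  ∑ g : Fin (n + 1) → S,
    (if g 0 = s₀ then (1 : ℝ) else 0) *
      ∏ i : Fin n, (H i.succ).indicator (p (g i.castSucc) (A i)) (g i.succ)

theorem classPathSum_zero (p : S → L → S → ℝ) (H : Fin 1 → Set S) (A : Fin 0 → L) (s₀ : S) :
    classPathSum p H A s₀ = 1 := by
  rw [classPathSum, ← (Equiv.funUnique (Fin 1) S).symm.sum_comp]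
  simp [Equiv.funUnique]

theorem classPathSum_succ {n : ℕ} (p : S → L → S → ℝ) (H : Fin (n + 2) → Set S)
    (A : Fin (n + 1) → L) (s₀ : S) :
    classPathSum p H A s₀ =
      ∑ y, (H 1).indicator (p s₀ (A 0)) y * classPathSum p (Fin.tail H) (Fin.tail A) y := by
  rw [classPathSum, ← (Fin.consEquiv fun _ => S).sum_comp, Fintype.sum_prod_type]
  simp only [classPathSum, Finset.mul_sum]
  conv_rhs => rw [Finset.sum_comm]
  simp [Fin.prod_univ_succ, Fin.tail]

theorem classPathSum_eq_prod_PMA {p : S → L → S → ℝ} {R : S → S → Prop} (hR : IsStepBisim p R)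
    {n : ℕ} (H : Fin (n + 1) → Set S) (hH : ∀ i, IsClass R (H i)) (A : Fin n → L)
    {s₀ : S} (hs₀ : s₀ ∈ H 0) (r : Fin n → S) (hr : ∀ i, r i ∈ H i.castSucc) :
    classPathSum p H A s₀ = ∏ i, PMA p (A i) (r i) (H i.succ) := by
  induction n generalizing s₀ with
  | zero => simp [classPathSum_zero]
  | succ n ih =>
    have tail_eq : ∀ y ∈ H 1, classPathSum p (Fin.tail H) (Fin.tail A) y =
        ∏ i : Fin n, PMA p (A i.succ) (r i.succ) (H i.succ.succ) := fun y hy =>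
      ih (Fin.tail H) (fun i => hH _) (Fin.tail A) hy (Fin.tail r) (fun i => hr i.succ)
    calc classPathSum p H A s₀
        = ∑ y, (H 1).indicator (p s₀ (A 0)) y *
            ∏ i : Fin n, PMA p (A i.succ) (r i.succ) (H i.succ.succ) := by
          rw [classPathSum_succ]
          refine Finset.sum_congr rfl fun y _ => ?_
          by_cases hy : y ∈ H 1
          · rw [tail_eq y hy]
          · simp [hy]
      _ = PMA p (A 0) (r 0) (H 1) * ∏ i : Fin n, PMA p (A i.succ) (r i.succ) (H i.succ.succ) := by
          rw [← Finset.sum_mul, ← PMA, hR.PMA_eq_of_mem_class (hH 0) (hH 1) (A 0) hs₀ (hr 0)]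
      _ = ∏ i, PMA p (A i) (r i) (H i.succ) :=
          (Fin.prod_univ_succ fun i => PMA p (A i) (r i) (H i.succ)).symm

end

theorem path_sum_through_classes_general {S L : Type*} [Fintype S] [DecidableEq S]
    (p : S → L → S → ℝ)
    (R : S → S → Prop) (hR : IsStepBisim p R)
    (n : ℕ)
    (H : Fin (n + 1) → Set S) (hH : ∀ i, IsClass R (H i))
    (A : Fin n → L)
    (s₀ : S) (hs₀ : s₀ ∈ H 0)
    (r : Fin n → S) (hr : ∀ i : Fin n, r i ∈ H i.castSucc) :
    (∑ g : Fin (n + 1) → S,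
        (if g 0 = s₀ then (1 : ℝ) else 0) *
          ∏ i : Fin n, (H i.succ).indicator (p (g i.castSucc) (A i)) (g i.succ))
      = ∏ i : Fin n, PMA p (A i) (r i) (H i.succ) :=
  classPathSum_eq_prod_PMA hR H hH A hs₀ r hr

/-- Path-sum lemma from the proof of Theorem 8.1: the total probability of all
paths from `s₀` passing through the equivalence classes `H 1, …, H n` via
labels `A 1, …, A n` equals the product of the class-to-class transition
probabilities, computed from arbitrary representatives `r i ∈ H i`. -/
theorem path_sum_through_classes {S L : Type*} [Fintype S] [DecidableEq S]
    (p : S → L → S → ℝ)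
    (hp_nonneg : ∀ s A t, 0 ≤ p s A t)
    (R : S → S → Prop) (hR : IsStepBisim p R)
    (n : ℕ) (hn : 1 ≤ n)
    (H : Fin (n + 1) → Set S) (hH : ∀ i, IsClass R (H i))
    (A : Fin n → L)
    (s₀ : S) (hs₀ : s₀ ∈ H 0)
    (r : Fin n → S) (hr : ∀ i : Fin n, r i ∈ H i.castSucc) :
    (∑ g : Fin (n + 1) → S,
        (if g 0 = s₀ then (1 : ℝ) else 0) *
          ∏ i : Fin n, (H i.succ).indicator (p (g i.castSucc) (A i)) (g i.succ))
      = ∏ i : Fin n, PMA p (A i) (r i) (H i.succ) :=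
  path_sum_through_classes_general p R hR n H hH A s₀ hs₀ r hr
end

section
/- Let S₁, S₂ be finite types, S = S₁ ⊕ S₂ their disjoint union, L a finite type of labels, and p a step kernel on S that vanishes between the two components (p s A t = 0 whenever s and t lie in different components). Let R be a step stochastic bisimulation for p. Then for every R-equivalence class H, any s ∈ H lying in the S₁-component and any s' ∈ H lying in the S₂-component satisfy Σ_{A∈L} Σ_{t ∈ H ∩ inl(S₁)} p s A t = Σ_{A∈L} Σ_{t ∈ H ∩ inr(S₂)} p s' A t. Consequently, writing q for this common value and assuming q < 1, the average sojourn time 1/(1−q) and the sojourn time variance q/(1−q)² of the class H computed in the first component coincide with those computed in the second component. (Proposition 8.2: step stochastic bisimulation preserves the sojourn time averages and variances in the equivalence classes.) -/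
theorem PMA_inter_of_support_subset {S L : Type*} [Fintype S] {p : S → L → S → ℝ}
    {A : L} {s : S} {K : Set S} (hK : Function.support (p s A) ⊆ K) (H : Set S) :
    PMA p A s (H ∩ K) = PMA p A s H := by
  simp only [PMA, ← Set.indicator_indicator, Set.indicator_eq_self.mpr hK]

theorem support_subset_range_inl {S₁ S₂ L : Type*} {p : S₁ ⊕ S₂ → L → S₁ ⊕ S₂ → ℝ}
    (hp12 : ∀ s A t, p (Sum.inl s) A (Sum.inr t) = 0) (s : S₁) (A : L) :
    Function.support (p (Sum.inl s) A) ⊆ Set.range Sum.inl := by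
  rintro (t | t) ht
  · exact ⟨t, rfl⟩
  · exact absurd (hp12 s A t) ht

theorem support_subset_range_inr {S₁ S₂ L : Type*} {p : S₁ ⊕ S₂ → L → S₁ ⊕ S₂ → ℝ}
    (hp21 : ∀ s A t, p (Sum.inr s) A (Sum.inl t) = 0) (s : S₂) (A : L) :
    Function.support (p (Sum.inr s) A) ⊆ Set.range Sum.inr := by
  rintro (t | t) ht
  · exact absurd (hp21 s A t) ht
  · exact ⟨t, rfl⟩

theorem IsClass.rel_of_mem_s11 {S : Type*} {R : S → S → Prop} (hR : Equivalence R)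
    {H : Set S} (hH : IsClass R H) {x y : S} (hx : x ∈ H) (hy : y ∈ H) : R x y := by
  obtain ⟨s, rfl⟩ := hH
  exact hR.trans (hR.symm hx) hy

theorem IsStepBisim.sum_PMA_eq_of_mem {S L : Type*} [Fintype S] [Fintype L]
    {p : S → L → S → ℝ} {R : S → S → Prop} (hR : IsStepBisim p R)
    {H : Set S} (hH : IsClass R H) {x y : S} (hx : x ∈ H) (hy : y ∈ H) :
    ∑ A, PMA p A x H = ∑ A, PMA p A y H :=
  Finset.sum_congr rfl fun A _ => hR.2 x y (hH.rel_of_mem_s11 hR.1 hx hy) H hH A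

theorem stepBisim_sojourn_time_general {S₁ S₂ L : Type*}
    [Fintype S₁] [Fintype S₂] [Fintype L]
    (p : S₁ ⊕ S₂ → L → S₁ ⊕ S₂ → ℝ)
    (hp12 : ∀ s A t, p (Sum.inl s) A (Sum.inr t) = 0)
    (hp21 : ∀ s A t, p (Sum.inr s) A (Sum.inl t) = 0)
    (R : (S₁ ⊕ S₂) → (S₁ ⊕ S₂) → Prop) (hR : IsStepBisim p R) :
    ∀ H : Set (S₁ ⊕ S₂), IsClass R H →
      ∀ s₁ : S₁, ∀ s₂ : S₂, Sum.inl s₁ ∈ H → Sum.inr s₂ ∈ H →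
        (∑ A : L, PMA p A (Sum.inl s₁) (H ∩ Set.range Sum.inl))
            = (∑ A : L, PMA p A (Sum.inr s₂) (H ∩ Set.range Sum.inr)) ∧
          (∀ q₁ q₂ : ℝ,
            q₁ = (∑ A : L, PMA p A (Sum.inl s₁) (H ∩ Set.range Sum.inl)) →
            q₂ = (∑ A : L, PMA p A (Sum.inr s₂) (H ∩ Set.range Sum.inr)) →
            q₁ < 1 →
            1 / (1 - q₁) = 1 / (1 - q₂) ∧
              q₁ / (1 - q₁) ^ 2 = q₂ / (1 - q₂) ^ 2) := by
  intro H hH s₁ s₂ h₁ h₂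
  have hq : (∑ A : L, PMA p A (Sum.inl s₁) (H ∩ Set.range Sum.inl))
      = (∑ A : L, PMA p A (Sum.inr s₂) (H ∩ Set.range Sum.inr)) := by
    simp only [PMA_inter_of_support_subset (support_subset_range_inl hp12 _ _),
      PMA_inter_of_support_subset (support_subset_range_inr hp21 _ _)]
    exact hR.sum_PMA_eq_of_mem hH h₁ h₂
  refine ⟨hq, ?_⟩
  rintro q₁ q₂ rfl rfl -
  rw [hq]
  exact ⟨rfl, rfl⟩

/-- Proposition 8.2: a step stochastic bisimulation on the disjoint union of
two processes preserves the self-transition probability of every equivalence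
class computed in either component; consequently the average sojourn times
`1/(1−q)` and the sojourn time variances `q/(1−q)²` in the equivalence
classes coincide. -/
theorem stepBisim_sojourn_time {S₁ S₂ L : Type*}
    [Fintype S₁] [Fintype S₂] [Fintype L]
    (p : S₁ ⊕ S₂ → L → S₁ ⊕ S₂ → ℝ)
    (hp_nonneg : ∀ s A t, 0 ≤ p s A t)
    (hp12 : ∀ s A t, p (Sum.inl s) A (Sum.inr t) = 0)
    (hp21 : ∀ s A t, p (Sum.inr s) A (Sum.inl t) = 0)
    (R : (S₁ ⊕ S₂) → (S₁ ⊕ S₂) → Prop) (hR : IsStepBisim p R) :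
    ∀ H : Set (S₁ ⊕ S₂), IsClass R H →
      ∀ s₁ : S₁, ∀ s₂ : S₂, Sum.inl s₁ ∈ H → Sum.inr s₂ ∈ H →
        (∑ A : L, PMA p A (Sum.inl s₁) (H ∩ Set.range Sum.inl))
            = (∑ A : L, PMA p A (Sum.inr s₂) (H ∩ Set.range Sum.inr)) ∧
          (∀ q₁ q₂ : ℝ,
            q₁ = (∑ A : L, PMA p A (Sum.inl s₁) (H ∩ Set.range Sum.inl)) →
            q₂ = (∑ A : L, PMA p A (Sum.inr s₂) (H ∩ Set.range Sum.inr)) →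
            q₁ < 1 →
            1 / (1 - q₁) = 1 / (1 - q₂) ∧
              q₁ / (1 - q₁) ^ 2 = q₂ / (1 - q₂) ^ 2) :=
  stepBisim_sojourn_time_general p hp12 hp21 R hR
end

section
/- Let S be a finite type, P : S → S → ℝ a row-stochastic matrix, and R an ordinary lumping for P. Let Q be a quotient matrix for P, i.e. a function on pairs of R-equivalence classes satisfying Q([s], c) = Σ_{t ∈ c} P(s,t) for every s ∈ S and every R-class c, where [s] denotes the class of s (this is well defined by lumpability). If ψ : S → ℝ is a stationary distribution of P (Σ_s ψ(s)·P(s,t) = ψ(t) for all t, ψ ≥ 0, Σ_s ψ(s) = 1), then ψ̂(c) := Σ_{s∈c} ψ(s) is a stationary distribution of Q: Σ_{c'} ψ̂(c')·Q(c',c) = ψ̂(c) for every class c, ψ̂ ≥ 0 and Σ_c ψ̂(c) = 1; moreover Q is row-stochastic. (Section 8.1: the steady-state probability of each quotient state equals the sum of the steady-state probabilities of its constituent states, φ_{↔ss}(K) = Σ_{s∈K} φ(s).) -/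
/-!
Aggregating along the class map `cl` turns `∑_{c'} ψ̂(c') Q(c', c)` into `∑_s ψ(s) Q([s], c)`.
Since `Q([s], c)` is the mass `P` sends from `s` into the class `c`, exchanging the two sums gives
the total mass `ψ P` puts on `c`, which is `ψ̂(c)` by stationarity of `ψ`. Row sums and total mass
are preserved for the same reason: summing over all classes of a fibrewise sum is summing over `S`.
-/

open Finset

section FiberSum

variable {S K : Type*} [Fintype S] [DecidableEq K] (cl : S → K)

theorem fiber_sum_nonneg {f : S → ℝ} (hf : ∀ s, 0 ≤ f s) (c : K) :
    0 ≤ ∑ s, if cl s = c then f s else 0 :=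
  sum_nonneg fun s _ => by split_ifs <;> simp [hf]

theorem sum_fiber_sum_mul [Fintype K] (f : S → ℝ) (g : K → ℝ) :
    ∑ c, (∑ s, if cl s = c then f s else 0) * g c = ∑ s, f s * g (cl s) := by
  simp only [sum_mul, ite_mul, zero_mul]
  rw [sum_comm]
  simp only [sum_ite_eq, mem_univ, if_true]

theorem sum_fiber_sum [Fintype K] (f : S → ℝ) :
    ∑ c, ∑ s, (if cl s = c then f s else 0) = ∑ s, f s := by
  simpa using sum_fiber_sum_mul cl f 1

end FiberSum

theorem quotient_stationary_distribution_general {S K : Type*}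
    [Fintype S] [Fintype K] [DecidableEq K]
    (P : S → S → ℝ)
    (hP_nonneg : ∀ s t, 0 ≤ P s t)
    (hP_row : ∀ s, ∑ t, P s t = 1)
    (cl : S → K) (hcl_surj : Function.Surjective cl)
    (Q : K → K → ℝ)
    (hQ : ∀ s c, Q (cl s) c = ∑ t, if cl t = c then P s t else 0)
    (ψ : S → ℝ)
    (hψ_nonneg : ∀ s, 0 ≤ ψ s)
    (hψ_sum : ∑ s, ψ s = 1)
    (hψ_stat : ∀ t, ∑ s, ψ s * P s t = ψ t)
    (ψhat : K → ℝ)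
    (hψhat : ∀ c, ψhat c = ∑ s, if cl s = c then ψ s else 0) :
    (∀ c c', 0 ≤ Q c c') ∧
    (∀ c, ∑ c', Q c c' = 1) ∧
    (∀ c, 0 ≤ ψhat c) ∧
    (∑ c, ψhat c = 1) ∧
    (∀ c, ∑ c', ψhat c' * Q c' c = ψhat c) := by
  refine ⟨?_, ?_, fun c => hψhat c ▸ fiber_sum_nonneg cl hψ_nonneg c, ?_, ?_⟩
  · intro c c'
    obtain ⟨s, rfl⟩ := hcl_surj c
    exact hQ s c' ▸ fiber_sum_nonneg cl (hP_nonneg s) c'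
  · intro c
    obtain ⟨s, rfl⟩ := hcl_surj c
    simp only [hQ, sum_fiber_sum, hP_row]
  · simp only [hψhat, sum_fiber_sum, hψ_sum]
  · intro c
    calc ∑ c', ψhat c' * Q c' c
        = ∑ s, ψ s * Q (cl s) c := by simp only [hψhat, sum_fiber_sum_mul]
      _ = ∑ t, if cl t = c then ∑ s, ψ s * P s t else 0 := by
          simp only [hQ, mul_sum, mul_ite, mul_zero]
          rw [sum_comm]
          simp only [← ite_sum_zero]
      _ = ψhat c := by simp only [hψ_stat, hψhat]

/-- Section 8.1: for a DTMC lumped by an ordinary lumping (with quotient map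
`cl : S → K` and quotient matrix `Q`), the quotient matrix is row-stochastic
and the steady-state probability of each quotient state equals the sum of
the steady-state probabilities of its constituent states; in particular the
aggregated distribution `ψ̂` is a stationary distribution of `Q`. -/
theorem quotient_stationary_distribution {S K : Type*}
    [Fintype S] [Fintype K] [DecidableEq K]
    (P : S → S → ℝ)
    (hP_nonneg : ∀ s t, 0 ≤ P s t)
    (hP_row : ∀ s, ∑ t, P s t = 1)
    (R : S → S → Prop) (hR : IsLumping P R)
    (cl : S → K) (hcl_surj : Function.Surjective cl)
    (hcl : ∀ s t, R s t ↔ cl s = cl t)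
    (Q : K → K → ℝ)
    (hQ : ∀ s c, Q (cl s) c = ∑ t, if cl t = c then P s t else 0)
    (ψ : S → ℝ)
    (hψ_nonneg : ∀ s, 0 ≤ ψ s)
    (hψ_sum : ∑ s, ψ s = 1)
    (hψ_stat : ∀ t, ∑ s, ψ s * P s t = ψ t)
    (ψhat : K → ℝ)
    (hψhat : ∀ c, ψhat c = ∑ s, if cl s = c then ψ s else 0) :
    (∀ c c', 0 ≤ Q c c') ∧
    (∀ c, ∑ c', Q c c' = 1) ∧
    (∀ c, 0 ≤ ψhat c) ∧
    (∑ c, ψhat c = 1) ∧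
    (∀ c, ∑ c', ψhat c' * Q c' c = ψhat c) :=
  quotient_stationary_distribution_general P hP_nonneg hP_row cl hcl_surj Q hQ ψ hψ_nonneg hψ_sum
    hψ_stat ψhat hψhat
end
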